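/- Let n ≥ 1, d ≥ 1, s > n − 1, and let Z ⊆ [0,1]^n satisfy H^s(Z) > 0. Then Z is d-definite: there exists a constant C such that every real polynomial P in n variables of total degree ≤ d with |P(z)| ≤ 1 for all z ∈ Z satisfies |P(x)| ≤ C for all x ∈ [0,1]^n. -/

import Mathlib

open Polynomial MeasureTheory Set
open scoped Topology NNReal ENNReal

namespace DDefiniteAux

variable {n : ℕ}

lemma hasDerivAt_eval_update (P : MvPolynomial (Fin n) ℝ) (y : Fin n → ℝ) (i : Fin n) (t : ℝ) :
    HasDerivAt (fun t => MvPolynomial.eval (Function.update y i t) P)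
      (MvPolynomial.eval (Function.update y i t) (MvPolynomial.pderiv i P)) t := by
  induction P using MvPolynomial.induction_on with
  | C a => simpa using hasDerivAt_const t a
  | add p q hp hq => simp only [map_add]; exact hp.add hq
  | mul_X p j hp =>
    by_cases hji : j = i
    · subst hji
      have h := hp.mul (hasDerivAt_id t)
      simp only [MvPolynomial.eval_mul, MvPolynomial.eval_X, Function.update_self,
        MvPolynomial.pderiv_mul, MvPolynomial.pderiv_X_self, map_add, map_mul, mul_one,
        map_one, id_eq] at h ⊢
      exact h
    · have h := hp.mul_const (y j)
      simp only [MvPolynomial.eval_mul, MvPolynomial.eval_X, Function.update_of_ne hji,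
        MvPolynomial.pderiv_mul, MvPolynomial.pderiv_X_of_ne hji, map_add, map_mul,
        mul_zero, add_zero] at h ⊢
      exact h

private lemma mvt_lower_aux {g g' : ℝ → ℝ} (hg : ∀ t, HasDerivAt g (g' t) t) {c : ℝ}
    {u v : ℝ} (hlt : u < v) (hb : ∀ t ∈ Icc u v, c ≤ |g' t|) :
    c * (v - u) ≤ |g u - g v| := by
  obtain ⟨ξ, hξ, hslope⟩ := exists_hasDerivAt_eq_slope g g' hlt
    (fun t _ => (hg t).continuousAt.continuousWithinAt) (fun t _ => hg t)
  have h1 : |g v - g u| = |g' ξ| * (v - u) := by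
    rw [hslope, abs_div, abs_of_pos (by linarith [hξ.1, hξ.2] : (0:ℝ) < v - u),
      div_mul_cancel₀ _ (sub_ne_zero.mpr hlt.ne')]
  have h2 : c ≤ |g' ξ| := hb ξ ⟨hξ.1.le, hξ.2.le⟩
  rw [abs_sub_comm, h1]
  exact mul_le_mul_of_nonneg_right h2 (by linarith [hξ.1, hξ.2])

lemma mvt_lower {g g' : ℝ → ℝ} (hg : ∀ t, HasDerivAt g (g' t) t) {c : ℝ} (hc : 0 ≤ c)
    {u v : ℝ} (hb : ∀ t ∈ Icc (min u v) (max u v), c ≤ |g' t|) :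
    c * |u - v| ≤ |g u - g v| := by
  rcases lt_trichotomy u v with h | h | h
  · rw [min_eq_left h.le, max_eq_right h.le] at hb
    rw [abs_of_nonpos (by linarith), neg_sub]
    exact mvt_lower_aux hg h hb
  · subst h; simp
  · rw [min_eq_right h.le, max_eq_left h.le] at hb
    rw [abs_of_nonneg (by linarith), abs_sub_comm]
    exact mvt_lower_aux hg h hb

lemma telescope (P : MvPolynomial (Fin n) ℝ) (I : Fin n → Set ℝ)
    (hI : ∀ j, Convex ℝ (I j)) {M : ℝ} (hM0 : 0 ≤ M)
    (hM : ∀ z ∈ Set.pi univ I, ∀ j, |MvPolynomial.eval z (MvPolynomial.pderiv j P)| ≤ M)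
    (T : Finset (Fin n)) :
    ∀ x y : Fin n → ℝ, x ∈ Set.pi univ I → y ∈ Set.pi univ I → (∀ j, j ∉ T → x j = y j) →
      |MvPolynomial.eval x P - MvPolynomial.eval y P| ≤ M * ∑ j ∈ T, |x j - y j| := by
  induction T using Finset.induction_on with
  | empty =>
    intro x y hx hy h
    have : x = y := funext fun j => h j (by simp)
    simp [this]
  | @insert j T hj ih =>
    intro x y hx hy hoff
    set x' := Function.update x j (y j) with hx'def
    have hx' : x' ∈ Set.pi univ I := by
      intro k _
      by_cases hk : k = j
      · subst hk; simpa [hx'def] using hy k (mem_univ k)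
      · simpa [hx'def, Function.update_of_ne hk] using hx k (mem_univ k)
    have step1 : |MvPolynomial.eval x P - MvPolynomial.eval x' P| ≤ M * |x j - y j| := by
      have hgd : ∀ t ∈ I j, HasDerivWithinAt (fun t => MvPolynomial.eval (Function.update x j t) P)
          (MvPolynomial.eval (Function.update x j t) (MvPolynomial.pderiv j P)) (I j) t :=
        fun t _ => (hasDerivAt_eval_update P x j t).hasDerivWithinAt
      have hbd : ∀ t ∈ I j,
          ‖MvPolynomial.eval (Function.update x j t) (MvPolynomial.pderiv j P)‖ ≤ M := by
        intro t ht
        refine hM _ ?_ j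
        intro k _
        by_cases hk : k = j
        · subst hk; simpa using ht
        · simpa [Function.update_of_ne hk] using hx k (mem_univ k)
      have := (hI j).norm_image_sub_le_of_norm_hasDerivWithin_le hgd hbd
        (hx j (mem_univ j)) (hy j (mem_univ j))
      simpa [Function.update_eq_self, Real.norm_eq_abs, abs_sub_comm] using this
    have hoff' : ∀ k, k ∉ T → x' k = y k := by
      intro k hk
      by_cases hkj : k = j
      · subst hkj; simp [hx'def]
      · rw [hx'def, Function.update_of_ne hkj]
        exact hoff k (by simp [hkj, hk])
    have step2 := ih x' y hx' hy hoff'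
    have hsum : ∑ k ∈ T, |x' k - y k| = ∑ k ∈ T, |x k - y k| := by
      refine Finset.sum_congr rfl fun k hk => ?_
      have : k ≠ j := fun h => hj (h ▸ hk)
      rw [hx'def, Function.update_of_ne this]
    calc |MvPolynomial.eval x P - MvPolynomial.eval y P|
        ≤ |MvPolynomial.eval x P - MvPolynomial.eval x' P|
          + |MvPolynomial.eval x' P - MvPolynomial.eval y P| := abs_sub_le _ _ _
      _ ≤ M * |x j - y j| + M * ∑ k ∈ T, |x k - y k| := by
          rw [hsum] at step2; exact add_le_add step1 step2
      _ = M * ∑ k ∈ Insert.insert j T, |x k - y k| := by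
          rw [Finset.sum_insert hj]; ring

lemma eq_C_of_totalDegree_eq_zero {P : MvPolynomial (Fin n) ℝ} (h : P.totalDegree = 0) :
    P = MvPolynomial.C (P.coeff 0) := by
  ext m
  rw [MvPolynomial.coeff_C]
  by_cases hm : m = 0
  · simp [hm, eq_comm]
  · rw [if_neg fun hh => hm hh.symm]
    by_contra hc
    have hmem : m ∈ P.support := MvPolynomial.mem_support_iff.mpr hc
    have := (MvPolynomial.totalDegree_eq_zero_iff (Fin n) P).mp h m hmem
    exact hm (Finsupp.ext this)

lemma totalDegree_pderiv_le {P : MvPolynomial (Fin n) ℝ} {d : ℕ} (hd : P.totalDegree ≤ d + 1)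
    (i : Fin n) : (MvPolynomial.pderiv i P).totalDegree ≤ d := by
  conv_lhs => rw [MvPolynomial.as_sum P]
  rw [map_sum]
  refine MvPolynomial.totalDegree_finsetSum_le ?_
  intro m hm
  rw [MvPolynomial.pderiv_monomial]
  by_cases hmi : m i = 0
  · simp [hmi]
  · refine (MvPolynomial.totalDegree_monomial_le _ _).trans ?_
    have hle : Finsupp.single i 1 ≤ m := by
      intro k
      by_cases hk : k = i
      · subst hk; simpa [Finsupp.single_apply] using Nat.one_le_iff_ne_zero.mpr hmi
      · simp [Finsupp.single_apply, Ne.symm hk]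
    have hadd : (m - Finsupp.single i 1) + Finsupp.single i 1 = m := tsub_add_cancel_of_le hle
    have hsum : ((m - Finsupp.single i 1) + Finsupp.single i 1).sum (fun _ => (id : ℕ → ℕ))
        = (m - Finsupp.single i 1).sum (fun _ => (id : ℕ → ℕ)) + 1 := by
      rw [Finsupp.sum_add_index' (fun _ => rfl) (fun _ _ _ => rfl)]
      simp
    have hm' : m.sum (fun _ => (id : ℕ → ℕ)) ≤ d + 1 :=
      le_trans (MvPolynomial.le_totalDegree hm) hd
    rw [hadd] at hsum
    omega

lemma local_null (hn : 1 ≤ n) (P : MvPolynomial (Fin n) ℝ) {i : Fin n} {a : Fin n → ℝ}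
    (ha : MvPolynomial.eval a (MvPolynomial.pderiv i P) ≠ 0) {s' : ℝ} (hs' : (n : ℝ) - 1 < s') :
    ∃ u ∈ 𝓝 a, μH[s'] ({x : Fin n → ℝ | MvPolynomial.eval x P = 0} ∩ u) = 0 := by
  have hn' : (1 : ℝ) ≤ (n : ℝ) := by exact_mod_cast hn
  have hs'0 : 0 ≤ s' := by linarith
  set c := |MvPolynomial.eval a (MvPolynomial.pderiv i P)| with hcdef
  have hc : 0 < c := abs_pos.mpr ha
  set V := {x : Fin n → ℝ | c / 2 < |MvPolynomial.eval x (MvPolynomial.pderiv i P)|} with hVdef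
  have hV : IsOpen V :=
    isOpen_lt continuous_const (continuous_abs.comp (MvPolynomial.continuous_eval _))
  have haV : a ∈ V := by simp only [hVdef, mem_setOf_eq, ← hcdef]; linarith
  obtain ⟨r, hr0, hrV⟩ := (Metric.nhds_basis_closedBall.mem_iff).mp (hV.mem_nhds haV)
  set K := Metric.closedBall a r with hKdef
  have hKc : IsCompact K := isCompact_closedBall a r
  obtain ⟨M, hM⟩ := hKc.exists_bound_of_continuousOn
    (f := fun x => ∑ j, |MvPolynomial.eval x (MvPolynomial.pderiv j P)|)
    (Continuous.continuousOn (by continuity))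
  have hMx : ∀ x ∈ K, ∀ j, |MvPolynomial.eval x (MvPolynomial.pderiv j P)| ≤ M := by
    intro x hx j
    refine le_trans ?_ ((le_abs_self _).trans (hM x hx))
    exact Finset.single_le_sum (f := fun j => |MvPolynomial.eval x (MvPolynomial.pderiv j P)|)
      (fun k _ => abs_nonneg _) (Finset.mem_univ j)
  have hM0 : 0 ≤ M := by
    have := hMx a (Metric.mem_closedBall_self hr0.le) i
    exact le_trans (abs_nonneg _) this
  set I : Fin n → Set ℝ := fun j => Metric.closedBall (a j) r with hIdef
  have hpi : K = Set.pi univ I := closedBall_pi a hr0.le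
  set π : (Fin n → ℝ) → ({j : Fin n // j ≠ i} → ℝ) := fun x j => x j.1 with hπdef
  set S := {x : Fin n → ℝ | MvPolynomial.eval x P = 0} ∩ K with hSdef
  set C0 := max 1 (M * n / (c / 2)) with hC0def
  have hC01 : 1 ≤ C0 := le_max_left _ _
  have hC00 : 0 ≤ C0 := le_trans zero_le_one hC01
  have key : ∀ x ∈ S, ∀ y ∈ S, dist x y ≤ C0 * dist (π x) (π y) := by
    intro x hx y hy
    have hxK : x ∈ K := hx.2
    have hyK : y ∈ K := hy.2
    have hxP : MvPolynomial.eval x P = 0 := hx.1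
    have hyP : MvPolynomial.eval y P = 0 := hy.1
    have hDnn : (0 : ℝ) ≤ dist (π x) (π y) := dist_nonneg
    have hcoord : ∀ j, (hj : j ≠ i) → |x j - y j| ≤ dist (π x) (π y) := by
      intro j hj
      have := dist_le_pi_dist (π x) (π y) ⟨j, hj⟩
      simpa [hπdef, Real.dist_eq] using this
    have hxai : ∀ j, |x j - a j| ≤ r := by
      intro j
      have := (dist_le_pi_dist x a j).trans (Metric.mem_closedBall.mp hxK)
      simpa [Real.dist_eq] using this
    have hyai : ∀ j, |y j - a j| ≤ r := by
      intro j
      have := (dist_le_pi_dist y a j).trans (Metric.mem_closedBall.mp hyK)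
      simpa [Real.dist_eq] using this
    set w := Function.update y i (x i) with hwdef
    have hwK : w ∈ K := by
      rw [hKdef, Metric.mem_closedBall, dist_pi_le_iff hr0.le]
      intro j
      by_cases hj : j = i
      · subst hj
        simpa [hwdef, Real.dist_eq] using hxai j
      · simpa [hwdef, Function.update_of_ne hj, Real.dist_eq] using hyai j
    have hA : c / 2 * |x i - y i| ≤ |MvPolynomial.eval w P| := by
      have h := mvt_lower (g := fun t => MvPolynomial.eval (Function.update y i t) P)
        (g' := fun t => MvPolynomial.eval (Function.update y i t) (MvPolynomial.pderiv i P))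
        (c := c / 2) (fun t => hasDerivAt_eval_update P y i t) (half_pos hc).le
        (u := x i) (v := y i) ?_
      · simpa [hwdef, Function.update_eq_self, hyP] using h
      · intro t ht
        have htK : Function.update y i t ∈ K := by
          rw [hKdef, Metric.mem_closedBall, dist_pi_le_iff hr0.le]
          intro j
          by_cases hj : j = i
          · subst hj
            simp only [Function.update_self, Real.dist_eq]
            have h1 := abs_le.mp (hxai j); have h2 := abs_le.mp (hyai j)
            rcases le_total (x j) (y j) with hle | hle
            · rw [min_eq_left hle, max_eq_right hle] at ht
              exact abs_le.mpr ⟨by linarith [ht.1], by linarith [ht.2]⟩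
            · rw [min_eq_right hle, max_eq_left hle] at ht
              exact abs_le.mpr ⟨by linarith [ht.1], by linarith [ht.2]⟩
          · simpa [Function.update_of_ne hj, Real.dist_eq] using hyai j
        exact le_of_lt (hrV htK)
    have hB : |MvPolynomial.eval w P| ≤ M * (n * dist (π x) (π y)) := by
      have hwpi : w ∈ Set.pi univ I := hpi ▸ hwK
      have hxpi : x ∈ Set.pi univ I := hpi ▸ hxK
      have ht := telescope P I (fun j => convex_closedBall _ _) hM0
        (fun z hz j => hMx z (hpi ▸ hz) j) Finset.univ w x hwpi hxpi
        (fun j hj => absurd (Finset.mem_univ j) hj)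
      have hsum : ∑ j, |w j - x j| ≤ (n : ℝ) * dist (π x) (π y) := by
        have hterm : ∀ j ∈ Finset.univ, |w j - x j| ≤ dist (π x) (π y) := by
          intro j _
          by_cases hj : j = i
          · subst hj; simp [hwdef, Function.update_self, hDnn]
          · rw [hwdef, Function.update_of_ne hj, abs_sub_comm]
            exact hcoord j hj
        calc ∑ j, |w j - x j| ≤ ∑ _j : Fin n, dist (π x) (π y) :=
              Finset.sum_le_sum hterm
          _ = (n : ℝ) * dist (π x) (π y) := by
              simp [Finset.sum_const, mul_comm]
      calc |MvPolynomial.eval w P| = |MvPolynomial.eval w P - MvPolynomial.eval x P| := by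
            rw [hxP, sub_zero]
        _ ≤ M * ∑ j, |w j - x j| := ht
        _ ≤ M * ((n : ℝ) * dist (π x) (π y)) := by
            exact mul_le_mul_of_nonneg_left hsum hM0
    rw [dist_pi_le_iff (by positivity)]
    intro j
    by_cases hj : j = i
    · subst hj
      rw [Real.dist_eq]
      have h1 : |x j - y j| ≤ M * n / (c / 2) * dist (π x) (π y) := by
        rw [div_mul_eq_mul_div, le_div_iff₀ (half_pos hc)]
        nlinarith [hA.trans hB]
      exact h1.trans (mul_le_mul_of_nonneg_right (le_max_right _ _) hDnn)
    · rw [Real.dist_eq]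
      exact (hcoord j hj).trans (le_mul_of_one_le_left hDnn hC01)
  -- now the measure estimate
  set f := Function.invFunOn π S with hfdef
  have hSsub : S ⊆ f '' (π '' S) := by
    intro x hx
    have hex : ∃ a' ∈ S, π a' = π x := ⟨x, hx, rfl⟩
    have h1 : f (π x) ∈ S := Function.invFunOn_mem hex
    have h2 : π (f (π x)) = π x := Function.invFunOn_eq hex
    have h3 := key x hx (f (π x)) h1
    rw [h2, dist_self, mul_zero] at h3
    have : x = f (π x) := by
      have := dist_le_zero.mp h3; exact this
    exact ⟨π x, mem_image_of_mem _ hx, this.symm⟩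
  have hlip : LipschitzOnWith C0.toNNReal f (π '' S) := by
    apply LipschitzOnWith.of_dist_le_mul
    rintro w₁ ⟨x₁, hx₁, rfl⟩ w₂ ⟨x₂, hx₂, rfl⟩
    have h1 : f (π x₁) ∈ S := Function.invFunOn_mem ⟨x₁, hx₁, rfl⟩
    have h2 : f (π x₂) ∈ S := Function.invFunOn_mem ⟨x₂, hx₂, rfl⟩
    have e1 : π (f (π x₁)) = π x₁ := Function.invFunOn_eq ⟨x₁, hx₁, rfl⟩
    have e2 : π (f (π x₂)) = π x₂ := Function.invFunOn_eq ⟨x₂, hx₂, rfl⟩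
    calc dist (f (π x₁)) (f (π x₂)) ≤ C0 * dist (π (f (π x₁))) (π (f (π x₂))) :=
          key _ h1 _ h2
      _ = ↑C0.toNNReal * dist (π x₁) (π x₂) := by
          rw [e1, e2, Real.coe_toNNReal _ hC00]
  have huniv : μH[s'] (univ : Set ({j : Fin n // j ≠ i} → ℝ)) = 0 := by
    have hcard : Fintype.card {j : Fin n // j ≠ i} = n - 1 := by
      rw [Fintype.card_subtype_compl, Fintype.card_subtype_eq, Fintype.card_fin]
    have hdim : dimH (univ : Set ({j : Fin n // j ≠ i} → ℝ)) = ((n - 1 : ℕ) : ℝ≥0∞) := by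
      rw [Real.dimH_univ_pi, hcard]
    have hlt : dimH (univ : Set ({j : Fin n // j ≠ i} → ℝ)) < (s'.toNNReal : ℝ≥0∞) := by
      rw [hdim]
      have hr : ((n - 1 : ℕ) : ℝ) < (s'.toNNReal : ℝ) := by
        rw [Real.coe_toNNReal _ hs'0, Nat.cast_sub hn]
        push_cast
        linarith
      exact_mod_cast hr
    have := hausdorffMeasure_of_dimH_lt hlt
    rwa [Real.coe_toNNReal _ hs'0] at this
  have hπS : μH[s'] (π '' S) = 0 := measure_mono_null (subset_univ _) huniv
  have himg : μH[s'] (f '' (π '' S)) = 0 := by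
    have h := hlip.hausdorffMeasure_image_le hs'0
    rw [hπS, mul_zero] at h
    exact le_antisymm h (by simp)
  have hS0 : μH[s'] S = 0 := measure_mono_null hSsub himg
  exact ⟨Metric.closedBall a r, Metric.closedBall_mem_nhds a hr0, hS0⟩

lemma null_zero_locus (hn : 1 ≤ n) :
    ∀ d : ℕ, ∀ P : MvPolynomial (Fin n) ℝ, P ≠ 0 → P.totalDegree ≤ d →
    ∀ s' : ℝ, (n : ℝ) - 1 < s' → μH[s'] {x : Fin n → ℝ | MvPolynomial.eval x P = 0} = 0 := by
  intro d
  induction d with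
  | zero =>
    intro P hP hPd s' hs'
    have hC := eq_C_of_totalDegree_eq_zero (Nat.le_zero.mp hPd)
    have hc0 : P.coeff 0 ≠ 0 := fun h => hP (by rw [hC, h, map_zero])
    have hempty : {x : Fin n → ℝ | MvPolynomial.eval x P = 0} = ∅ := by
      ext x
      simp only [mem_setOf_eq, mem_empty_iff_false, iff_false]
      intro hx
      rw [hC, MvPolynomial.eval_C] at hx
      exact hc0 hx
    rw [hempty]; exact measure_empty
  | succ d ih =>
    intro P hP hPd s' hs'
    by_cases hall : ∀ i, MvPolynomial.pderiv i P = 0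
    · have hconst : ∀ x y : Fin n → ℝ, MvPolynomial.eval x P = MvPolynomial.eval y P := by
        intro x y
        have h := telescope P (fun _ => (univ : Set ℝ)) (fun _ => convex_univ)
          (M := 0) le_rfl (fun z _ j => by simp [hall j]) Finset.univ x y
          (by simp) (by simp) (fun j hj => absurd (Finset.mem_univ j) hj)
        rw [zero_mul] at h
        have := le_antisymm h (abs_nonneg _)
        exact sub_eq_zero.mp (abs_eq_zero.mp this)
      by_cases hzero : ∃ x : Fin n → ℝ, MvPolynomial.eval x P = 0
      · obtain ⟨x₀, hx₀⟩ := hzero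
        exact absurd (MvPolynomial.funext fun x => by
          rw [map_zero, hconst x x₀, hx₀]) hP
      · push_neg at hzero
        have hempty : {x : Fin n → ℝ | MvPolynomial.eval x P = 0} = ∅ := by
          ext x; simp [hzero x]
        rw [hempty]; exact measure_empty
    · push_neg at hall
      obtain ⟨i₀, hi₀⟩ := hall
      set Y := {x : Fin n → ℝ | MvPolynomial.eval x P = 0} with hYdef
      set R := {x ∈ Y | ∃ i, MvPolynomial.eval x (MvPolynomial.pderiv i P) ≠ 0} with hRdef
      set Sg := {x ∈ Y | ∀ i, MvPolynomial.eval x (MvPolynomial.pderiv i P) = 0} with hSgdef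
      have hYRS : Y ⊆ R ∪ Sg := by
        intro x hx
        by_cases h : ∀ i, MvPolynomial.eval x (MvPolynomial.pderiv i P) = 0
        · exact Or.inr ⟨hx, h⟩
        · push_neg at h
          exact Or.inl ⟨hx, h⟩
      have hR : μH[s'] R = 0 := by
        apply measure_null_of_locally_null
        intro x hx
        obtain ⟨hxY, i, hi⟩ := hx
        obtain ⟨u, hu, hu0⟩ := local_null hn P hi hs'
        refine ⟨R ∩ u, Filter.inter_mem self_mem_nhdsWithin (mem_nhdsWithin_of_mem_nhds hu), ?_⟩
        refine measure_mono_null ?_ hu0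
        intro y hy
        exact ⟨hy.1.1, hy.2⟩
      have hSg : μH[s'] Sg = 0 := by
        refine measure_mono_null (fun x hx => hx.2 i₀) ?_
        exact ih (MvPolynomial.pderiv i₀ P) hi₀ (totalDegree_pderiv_le hPd i₀) s' hs'
      exact measure_mono_null hYRS (measure_union_null hR hSg)

lemma transfer {s' : ℝ} (hs'0 : 0 ≤ s') {A : Set (Fin n → ℝ)} (hA : μH[s'] A = 0) :
    μH[s'] {x : EuclideanSpace ℝ (Fin n) | (fun i => x i) ∈ A} = 0 := by
  set e : (Fin n → ℝ) → EuclideanSpace ℝ (Fin n) := fun x => WithLp.toLp 2 x with hedef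
  have hanti := PiLp.antilipschitzWith_ofLp 2 (fun _ : Fin n => ℝ)
  have hlip : LipschitzWith ((Fintype.card (Fin n) : ℝ≥0) ^ ((1 : ℝ≥0∞) / 2).toReal) e :=
    fun x y => hanti (e x) (e y)
  have himg : {x : EuclideanSpace ℝ (Fin n) | (fun i => x i) ∈ A} = e '' A := by
    ext x
    constructor
    · intro hx
      exact ⟨fun i => x i, hx, rfl⟩
    · rintro ⟨y, hy, rfl⟩
      exact hy
  rw [himg]
  have h := hlip.hausdorffMeasure_image_le hs'0 A
  rw [hA, mul_zero] at h
  exact le_antisymm h (by simp)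

end DDefiniteAux

open DDefiniteAux

set_option maxHeartbeats 1000000 in
set_option synthInstance.maxHeartbeats 400000 in
/-- A set `Z ⊆ [0,1]^n` of positive `s`-dimensional Hausdorff measure (with respect to the
Euclidean metric), `s > n − 1`, is `d`-definite for every `d`. -/
theorem d_definite_of_hausdorff_measure_pos (n : ℕ) (hn : 1 ≤ n) (d : ℕ) (hd : 1 ≤ d)
    (s : ℝ) (hs : (n : ℝ) - 1 < s)
    (Z : Set (EuclideanSpace ℝ (Fin n)))
    (hZ : Z ⊆ {x : EuclideanSpace ℝ (Fin n) | ∀ i, x i ∈ Icc (0 : ℝ) 1})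
    (hH : 0 < μH[s] Z) :
    ∃ C : ℝ, ∀ P : MvPolynomial (Fin n) ℝ, P.totalDegree ≤ d →
      (∀ z ∈ Z, |MvPolynomial.eval (fun i => z i) P| ≤ 1) →
      ∀ x : EuclideanSpace ℝ (Fin n), (∀ i, x i ∈ Icc (0 : ℝ) 1) →
        |MvPolynomial.eval (fun i => x i) P| ≤ C := by
  classical
  have hn' : (1 : ℝ) ≤ (n : ℝ) := by exact_mod_cast hn
  have hs0 : 0 ≤ s := by linarith
  -- the unit cube
  set cube : Set (Fin n → ℝ) := Set.pi univ (fun _ => Icc (0 : ℝ) 1) with hcubedef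
  have hcubeC : IsCompact cube := isCompact_univ_pi fun _ => isCompact_Icc
  have hcube0 : (fun _ => 0 : Fin n → ℝ) ∈ cube := fun i _ => ⟨le_refl 0, zero_le_one⟩
  -- the finite-dimensional space of polynomials
  set V : Submodule ℝ (MvPolynomial (Fin n) ℝ) :=
    MvPolynomial.restrictTotalDegree (Fin n) ℝ d with hVdef
  haveI : Module.Finite ℝ V := by rw [hVdef]; infer_instance
  haveI : Module.Free ℝ V := Module.Free.of_divisionRing ℝ V
  set m : ℕ := Module.finrank ℝ V with hmdef
  set b : Module.Basis (Fin m) ℝ V := Module.finBasis ℝ V with hbdef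
  set poly : (Fin m → ℝ) → MvPolynomial (Fin n) ℝ :=
    fun c => ((b.equivFun.symm c : V) : MvPolynomial (Fin n) ℝ) with hpolydef
  have hpoly_eval : ∀ (x : Fin n → ℝ) c,
      MvPolynomial.eval x (poly c) = ∑ j, c j * MvPolynomial.eval x (b j : MvPolynomial (Fin n) ℝ) := by
    intro x c
    simp only [hpolydef, Module.Basis.equivFun_symm_apply, AddSubmonoidClass.coe_finset_sum,
      map_sum, SetLike.val_smul, MvPolynomial.smul_eval]
  have hpoly_smul : ∀ (t : ℝ) c, poly (t • c) = t • poly c := by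
    intro t c
    simp only [hpolydef, _root_.map_smul, SetLike.val_smul]
  have hpoly_sub : ∀ c c', poly (c - c') = poly c - poly c' := by
    intro c c'
    simp only [hpolydef, _root_.map_sub, AddSubgroupClass.coe_sub]
  -- bound on the basis polynomials over the cube
  obtain ⟨L, hL⟩ := hcubeC.exists_bound_of_continuousOn
    (f := fun x => ∑ j, |MvPolynomial.eval x (b j : MvPolynomial (Fin n) ℝ)|)
    (Continuous.continuousOn (continuous_finset_sum _ fun j _ =>
      (MvPolynomial.continuous_eval _).abs))
  have hL0 : 0 ≤ L := by
    refine le_trans ?_ ((le_abs_self _).trans (hL _ hcube0))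
    exact Finset.sum_nonneg fun j _ => abs_nonneg _
  have pointb : ∀ c, ∀ x ∈ cube, |MvPolynomial.eval x (poly c)| ≤ L * ‖c‖ := by
    intro c x hx
    rw [hpoly_eval]
    calc |∑ j, c j * MvPolynomial.eval x (b j : MvPolynomial (Fin n) ℝ)|
        ≤ ∑ j, |c j * MvPolynomial.eval x (b j : MvPolynomial (Fin n) ℝ)| :=
          Finset.abs_sum_le_sum_abs _ _
      _ ≤ ∑ j, ‖c‖ * |MvPolynomial.eval x (b j : MvPolynomial (Fin n) ℝ)| := by
          refine Finset.sum_le_sum fun j _ => ?_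
          rw [abs_mul]
          exact mul_le_mul_of_nonneg_right
            (by simpa [Real.norm_eq_abs] using norm_le_pi_norm c j) (abs_nonneg _)
      _ = ‖c‖ * ∑ j, |MvPolynomial.eval x (b j : MvPolynomial (Fin n) ℝ)| := by
          rw [Finset.mul_sum]
      _ ≤ ‖c‖ * L :=
          mul_le_mul_of_nonneg_left ((le_abs_self _).trans (hL x hx)) (norm_nonneg c)
      _ = L * ‖c‖ := mul_comm _ _
  -- facts about Z
  have hZne : Z.Nonempty := by
    rcases Set.eq_empty_or_nonempty Z with h | h
    · rw [h] at hH; simp at hH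
    · exact h
  have zcube : ∀ z ∈ Z, (fun i => z i) ∈ cube := fun z hz i _ => hZ hz i
  -- the sup seminorm over Z
  set p : (Fin m → ℝ) → ℝ :=
    fun c => sSup ((fun z : EuclideanSpace ℝ (Fin n) =>
      |MvPolynomial.eval (fun i => z i) (poly c)|) '' Z) with hpdef
  have hbdd : ∀ c, BddAbove ((fun z : EuclideanSpace ℝ (Fin n) =>
      |MvPolynomial.eval (fun i => z i) (poly c)|) '' Z) := by
    intro c
    refine ⟨L * ‖c‖, ?_⟩
    rintro v ⟨z, hz, rfl⟩
    exact pointb c _ (zcube z hz)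
  have hple : ∀ c, ∀ z ∈ Z, |MvPolynomial.eval (fun i => z i) (poly c)| ≤ p c :=
    fun c z hz => le_csSup (hbdd c) (mem_image_of_mem _ hz)
  have hpub : ∀ c (B : ℝ), (∀ z ∈ Z, |MvPolynomial.eval (fun i => z i) (poly c)| ≤ B) → p c ≤ B := by
    intro c B hB
    refine csSup_le (hZne.image _) ?_
    rintro v ⟨z, hz, rfl⟩
    exact hB z hz
  have homog : ∀ (t : ℝ), 0 ≤ t → ∀ c, p (t • c) ≤ t * p c := by
    intro t ht c
    refine hpub _ _ fun z hz => ?_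
    rw [hpoly_smul, MvPolynomial.smul_eval, abs_mul, abs_of_nonneg ht]
    exact mul_le_mul_of_nonneg_left (hple c z hz) ht
  have hlipp : ∀ c c', p c ≤ p c' + L * ‖c - c'‖ := by
    intro c c'
    refine hpub _ _ fun z hz => ?_
    have hsplit : MvPolynomial.eval (fun i => z i) (poly c)
        = MvPolynomial.eval (fun i => z i) (poly c')
          + MvPolynomial.eval (fun i => z i) (poly (c - c')) := by
      rw [hpoly_sub, map_sub]; ring
    rw [hsplit]
    exact (abs_add_le _ _).trans
      (add_le_add (hple c' z hz) (pointb (c - c') _ (zcube z hz)))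
  have hcont : Continuous p := by
    have : LipschitzWith L.toNNReal p := by
      apply LipschitzWith.of_dist_le_mul
      intro c c'
      rw [Real.dist_eq, dist_eq_norm, Real.coe_toNNReal _ hL0]
      have h1 := hlipp c c'
      have h2 := hlipp c' c
      rw [norm_sub_rev] at h2
      exact abs_sub_le_iff.mpr ⟨by linarith, by linarith⟩
    exact this.continuous
  have hppos : ∀ c, c ≠ 0 → 0 < p c := by
    intro c hc
    have hPne : poly c ≠ 0 := by
      intro h
      apply hc
      have h0 : (b.equivFun.symm c : V) = 0 := by
        exact_mod_cast Submodule.coe_eq_zero.mp h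
      have := (LinearEquiv.map_eq_zero_iff b.equivFun.symm).mp h0
      exact this
    have hdeg : (poly c).totalDegree ≤ d := by
      have hmem := (b.equivFun.symm c).2
      rwa [MvPolynomial.mem_restrictTotalDegree] at hmem
    have hnz : ∃ z ∈ Z, MvPolynomial.eval (fun i => z i) (poly c) ≠ 0 := by
      by_contra h
      push_neg at h
      have hnull := transfer hs0 (null_zero_locus hn d (poly c) hPne hdeg s hs)
      have hsub : Z ⊆ {x : EuclideanSpace ℝ (Fin n) |
          (fun i => x i) ∈ {w : Fin n → ℝ | MvPolynomial.eval w (poly c) = 0}} :=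
        fun z hz => h z hz
      exact absurd (measure_mono_null hsub hnull) hH.ne'
    obtain ⟨z, hz, hnz⟩ := hnz
    exact lt_of_lt_of_le (abs_pos.mpr hnz) (hple c z hz)
  -- the sphere and the minimum
  have hVnontriv : Nontrivial V := by
    refine ⟨⟨MvPolynomial.C 1, ?_⟩, 0, ?_⟩
    · rw [MvPolynomial.mem_restrictTotalDegree]
      simp [MvPolynomial.totalDegree_C]
    · intro h
      have h' : (MvPolynomial.C (1 : ℝ) : MvPolynomial (Fin n) ℝ) = 0 := by
        simpa using congrArg Subtype.val h
      rw [map_one] at h'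
      exact one_ne_zero h'
  haveI := hVnontriv
  have hm : 0 < m := Module.finrank_pos
  haveI : Nonempty (Fin m) := Fin.pos_iff_nonempty.mp hm
  have hsphne : (Metric.sphere (0 : Fin m → ℝ) 1).Nonempty :=
    NormedSpace.sphere_nonempty.mpr zero_le_one
  obtain ⟨c₀, hc₀, hmin⟩ := (isCompact_sphere (0 : Fin m → ℝ) 1).exists_isMinOn hsphne
    hcont.continuousOn
  have hc₀norm : ‖c₀‖ = 1 := mem_sphere_zero_iff_norm.mp hc₀
  have hε : 0 < p c₀ := hppos c₀ (by
    intro h; rw [h] at hc₀norm; simp at hc₀norm)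
  set ε := p c₀ with hεdef
  refine ⟨L / ε, ?_⟩
  intro P hPd hPZ x hx
  have hPV : P ∈ V := by
    show P ∈ MvPolynomial.restrictTotalDegree (Fin n) ℝ d
    rw [MvPolynomial.mem_restrictTotalDegree]
    exact hPd
  set c : Fin m → ℝ := b.equivFun ⟨P, hPV⟩ with hcdef
  have hpc : poly c = P := by
    simp only [hpolydef, hcdef, LinearEquiv.symm_apply_apply]
  have hxcube : (fun i => x i) ∈ cube := fun i _ => hx i
  by_cases hc : c = 0
  · have hP0 : P = 0 := by
      rw [← hpc, hc]
      simp only [hpolydef, _root_.map_zero, ZeroMemClass.coe_zero]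
    rw [hP0]
    simp only [map_zero, abs_zero]
    positivity
  · have hnorm : 0 < ‖c‖ := norm_pos_iff.mpr hc
    have hu : (‖c‖⁻¹ • c) ∈ Metric.sphere (0 : Fin m → ℝ) 1 := by
      rw [mem_sphere_zero_iff_norm, norm_smul, norm_inv, norm_norm,
        inv_mul_cancel₀ hnorm.ne']
    have h1 : ε ≤ p (‖c‖⁻¹ • c) := hmin hu
    have h2 : p (‖c‖⁻¹ • c) ≤ ‖c‖⁻¹ * p c := homog _ (inv_nonneg.mpr hnorm.le) c
    have h3 : p c ≤ 1 := hpub c 1 fun z hz => by rw [hpc]; exact hPZ z hz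
    have h4 : ε ≤ ‖c‖⁻¹ := h1.trans (h2.trans (by
      calc ‖c‖⁻¹ * p c ≤ ‖c‖⁻¹ * 1 :=
            mul_le_mul_of_nonneg_left h3 (inv_nonneg.mpr hnorm.le)
        _ = ‖c‖⁻¹ := mul_one _))
    have h5 : ‖c‖ ≤ ε⁻¹ := by
      have hmul : ε * ‖c‖ ≤ 1 := by
        have hq := mul_le_mul_of_nonneg_right h4 hnorm.le
        rwa [inv_mul_cancel₀ hnorm.ne'] at hq
      calc ‖c‖ = (ε * ‖c‖) / ε := by field_simp
        _ ≤ 1 / ε := by gcongr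
        _ = ε⁻¹ := one_div ε
    calc |MvPolynomial.eval (fun i => x i) P|
        = |MvPolynomial.eval (fun i => x i) (poly c)| := by rw [hpc]
      _ ≤ L * ‖c‖ := pointb c _ hxcube
      _ ≤ L * ε⁻¹ := mul_le_mul_of_nonneg_left h5 hL0
      _ = L / ε := (div_eq_mul_inv L ε).symm
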